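/- arXiv:1909.12658 — 4 statements merged into one kernel-verified Lean document; each statement's English description precedes it below -/
import Mathlib

section
/- Let n ∈ ℕ, let f : (Fin n → Bool) → Bool, and let I ⊆ Fin n be a nonempty finite set. Then MC(I) = min_{k ∈ I} ( MC(I∖{k}) + w(I,k) ). -/
open Finset

def restrict (n : ℕ) (f : (Fin n → Bool) → Bool) (S : Finset (Fin n)) (b : Fin n → Bool) :
    (Fin n → Bool) → Bool :=
  fun x => f fun i => if i ∈ S then b i else x i

def BoolDependsOn (n : ℕ) (g : (Fin n → Bool) → Bool) (i : Fin n) : Prop :=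
  ∃ x : Fin n → Bool, g x ≠ g (Function.update x i (!x i))

noncomputable def width (n : ℕ) (f : (Fin n → Bool) → Bool) (I : Finset (Fin n)) (i : Fin n) : ℕ :=
  Set.ncard {g : (Fin n → Bool) → Bool | BoolDependsOn n g i ∧ ∃ b, g = restrict n f Iᶜ b}

noncomputable def RC (n : ℕ) (f : (Fin n → Bool) → Bool) (B J : Finset (Fin n)) : ℕ :=
  sInf { c | ∃ σ : Fin J.card ≃ {j // j ∈ J},
    c = ∑ j : Fin J.card,
          width n f (B ∪ (Finset.Iic j).image (fun t => ((σ t : {j // j ∈ J}) : Fin n))) (σ j) }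

noncomputable def MC (n : ℕ) (f : (Fin n → Bool) → Bool) (I : Finset (Fin n)) : ℕ :=
  RC n f ∅ I

section OrderingCost

variable {α : Type*} [DecidableEq α] (w : Finset α → α → ℕ) (B : Finset α)

def orderingCost {J : Finset α} {m : ℕ} (σ : Fin m ≃ J) : ℕ :=
  ∑ j : Fin m, w (B ∪ (Iic j).image (fun t => (σ t : α))) (σ j)

/-- `RC n f B J` is, by definition, `minOrderingCost (width n f) B J`. -/
noncomputable def minOrderingCost (J : Finset α) : ℕ :=
  sInf {c | ∃ σ : Fin J.card ≃ J, c = orderingCost w B σ}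

variable {w B}

lemma image_univ_coe_equiv {J : Finset α} {m : ℕ} (σ : Fin m ≃ J) :
    (univ : Finset (Fin m)).image (fun t => (σ t : α)) = J := by
  ext a
  simp only [mem_image, mem_univ, true_and]
  exact ⟨fun ⟨t, ht⟩ => ht ▸ (σ t).2, fun ha => ⟨σ.symm ⟨a, ha⟩, by simp⟩⟩

lemma orderingCost_eq_add_of_castSucc {J : Finset α} {k : α} {m : ℕ}
    (σ : Fin (m + 1) ≃ J) (σ' : Fin m ≃ J.erase k) (hlast : (σ (Fin.last m) : α) = k)
    (hcastSucc : ∀ j, (σ j.castSucc : α) = σ' j) :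
    orderingCost w B σ = orderingCost w B σ' + w (B ∪ J) k := by
  have hprefix : ∀ j : Fin m, (Iic j.castSucc).image (fun t => (σ t : α))
      = (Iic j).image (fun t => (σ' t : α)) := fun j => by
    rw [← Fin.finsetImage_castSucc_Iic, image_image]
    exact image_congr fun t _ => hcastSucc t
  rw [orderingCost, Fin.sum_univ_castSucc, ← Fin.top_eq_last, Iic_top, image_univ_coe_equiv,
    Fin.top_eq_last, hlast]
  simp only [orderingCost, hprefix, hcastSucc]

lemma exists_orderingCost_eq_erase_last {J : Finset α} {m : ℕ} (σ : Fin (m + 1) ≃ J) :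
    ∃ σ' : Fin m ≃ J.erase (σ (Fin.last m)),
      orderingCost w B σ = orderingCost w B σ' + w (B ∪ J) (σ (Fin.last m)) := by
  set k := (σ (Fin.last m) : α)
  have hne : ∀ j : Fin m, (σ j.castSucc : α) ≠ k := fun j h =>
    Fin.castSucc_ne_last j (σ.injective (Subtype.ext h))
  let g : Fin m → J.erase k := fun j => ⟨σ j.castSucc, mem_erase.2 ⟨hne j, (σ j.castSucc).2⟩⟩
  have hg : Function.Injective g := fun a b h => by simpa [g] using h
  have hcard : Fintype.card (Fin m) = Fintype.card (J.erase k) := by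
    have := Fintype.card_congr σ
    simp only [Fintype.card_fin, Fintype.card_coe] at this ⊢
    rw [card_erase_of_mem (σ (Fin.last m)).2]
    omega
  let σ' := Equiv.ofBijective g ((Fintype.bijective_iff_injective_and_card g).2 ⟨hg, hcard⟩)
  exact ⟨σ', orderingCost_eq_add_of_castSucc σ σ' rfl fun _ => rfl⟩

lemma exists_orderingCost_eq_snoc {J : Finset α} {k : α} (hk : k ∈ J) {m : ℕ}
    (σ' : Fin m ≃ J.erase k) :
    ∃ σ : Fin (m + 1) ≃ J, orderingCost w B σ = orderingCost w B σ' + w (B ∪ J) k := by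
  let g : Fin (m + 1) → J :=
    Fin.lastCases ⟨k, hk⟩ fun j => ⟨σ' j, mem_of_mem_erase (σ' j).2⟩
  have hg : Function.Surjective g := fun ⟨a, ha⟩ => by
    by_cases hak : a = k
    · exact ⟨Fin.last m, by simp [g, hak]⟩
    · exact ⟨(σ'.symm ⟨a, mem_erase.2 ⟨hak, ha⟩⟩).castSucc, by simp [g]⟩
  have hcard : Fintype.card (Fin (m + 1)) = Fintype.card J := by
    rw [Fintype.card_fin, Fintype.card_coe, ← card_erase_add_one hk]
    simpa using Fintype.card_congr σ'
  let σ := Equiv.ofBijective g ((Fintype.bijective_iff_surjective_and_card g).2 ⟨hg, hcard⟩)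
  exact ⟨σ, orderingCost_eq_add_of_castSucc σ σ' (by simp [σ, g]) fun j => by simp [σ, g]⟩

lemma minOrderingCost_le {J : Finset α} {m : ℕ} (σ : Fin m ≃ J) :
    minOrderingCost w B J ≤ orderingCost w B σ := by
  obtain rfl : J.card = m := by simpa using (Fintype.card_congr σ).symm
  exact Nat.sInf_le ⟨σ, rfl⟩

lemma exists_orderingCost_eq_minOrderingCost {J : Finset α} {m : ℕ} (hm : J.card = m) :
    ∃ σ : Fin m ≃ J, orderingCost w B σ = minOrderingCost w B J := by
  subst hm
  obtain ⟨σ, hσ⟩ := Nat.sInf_mem (s := {c | ∃ σ : Fin J.card ≃ J, c = orderingCost w B σ})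
    ⟨_, J.equivFin.symm, rfl⟩
  exact ⟨σ, hσ.symm⟩

/-- Dynamic-programming recursion: an optimal ordering splits into the variable read last, which
costs `w (B ∪ J) k`, and an optimal ordering of the remaining ones. -/
theorem minOrderingCost_eq_inf' {J : Finset α} (hJ : J.Nonempty) :
    minOrderingCost w B J = J.inf' hJ fun k => minOrderingCost w B (J.erase k) + w (B ∪ J) k := by
  apply le_antisymm
  · refine (le_inf'_iff _ _).2 fun k hk => ?_
    obtain ⟨σ', hσ'⟩ := exists_orderingCost_eq_minOrderingCost (w := w) (B := B) rfl
    obtain ⟨σ, hσ⟩ := exists_orderingCost_eq_snoc (w := w) (B := B) hk σ'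
    exact hσ' ▸ hσ ▸ minOrderingCost_le σ
  · obtain ⟨σ, hσ⟩ := exists_orderingCost_eq_minOrderingCost (w := w) (B := B)
      (Nat.succ_pred_eq_of_pos hJ.card_pos).symm
    obtain ⟨σ', hσ'⟩ := exists_orderingCost_eq_erase_last (w := w) (B := B) σ
    calc J.inf' hJ (fun k => minOrderingCost w B (J.erase k) + w (B ∪ J) k)
        ≤ orderingCost w B σ' + w (B ∪ J) (σ (Fin.last _)) :=
          (inf'_le _ (σ _).2).trans (Nat.add_le_add_right (minOrderingCost_le σ') _)
      _ = minOrderingCost w B J := hσ' ▸ hσ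

end OrderingCost

/-- Lemma 2 (key DP lemma, Friedman–Supowit): for nonempty `I`,
`MC(I) = min_{k ∈ I} (MC(I \ {k}) + w(I, k))`. -/
theorem stmt_0 (n : ℕ) (f : (Fin n → Bool) → Bool) (I : Finset (Fin n)) (hI : I.Nonempty) :
    MC n f I = I.inf' hI (fun k => MC n f (I.erase k) + width n f I k) := by
  have h := minOrderingCost_eq_inf' (w := width n f) (B := ∅) hI
  rwa [empty_union] at h
end

section
/- For all n, k ∈ ℕ with n ≥ 1 and k ≤ n, the binomial coefficient satisfies C(n,k) ≤ 2^{n·H(k/n)}, where the right-hand side is a real number and C(n,k) is cast to ℝ. -/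
/-- The binary entropy function `H(x) = -x·log₂ x - (1-x)·log₂(1-x)`
(with the convention `log₂ 0 = 0`, so `H(0) = H(1) = 0`). -/
noncomputable def binEntropy (x : ℝ) : ℝ :=
  -x * Real.logb 2 x - (1 - x) * Real.logb 2 (1 - x)

/-!
With `p = k / n`, the term `C(n,k) pᵏ (1-p)ⁿ⁻ᵏ` of the binomial expansion of `(p + (1-p))ⁿ = 1`
is at most `1`, while `2^(n·H(p)) = p⁻ᵏ (1-p)⁻⁽ⁿ⁻ᵏ⁾`. Clearing denominators, this is the
inequality `C(n,k) kᵏ (n-k)ⁿ⁻ᵏ ≤ nⁿ` between natural numbers, read off from `(k + (n-k))ⁿ`.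
Since `0⁰ = 1`, the edge cases `k = 0` and `k = n` need no separate treatment.
-/

theorem choose_mul_pow_mul_pow_le_add_pow {R : Type*} [CommSemiring R] [PartialOrder R]
    [IsOrderedRing R] {x y : R} (hx : 0 ≤ x) (hy : 0 ≤ y) {n k : ℕ} (hk : k ≤ n) :
    n.choose k * x ^ k * y ^ (n - k) ≤ (x + y) ^ n := by
  rw [add_pow]
  calc (n.choose k : R) * x ^ k * y ^ (n - k) = x ^ k * y ^ (n - k) * n.choose k := by ring
    _ ≤ ∑ m ∈ Finset.range (n + 1), x ^ m * y ^ (n - m) * n.choose m :=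
      Finset.single_le_sum (f := fun m => x ^ m * y ^ (n - m) * (n.choose m : R))
        (fun m _ => by positivity) (Finset.mem_range_succ_iff.mpr hk)

theorem Nat.choose_mul_pow_self_mul_pow_self_le {n k : ℕ} (hk : k ≤ n) :
    n.choose k * k ^ k * (n - k) ^ (n - k) ≤ n ^ n := by
  simpa [Nat.add_sub_cancel' hk] using
    choose_mul_pow_mul_pow_le_add_pow (Nat.zero_le k) (Nat.zero_le (n - k)) hk

theorem natCast_pow_self_pos (m : ℕ) : (0 : ℝ) < (m : ℝ) ^ m := by
  exact_mod_cast Nat.pow_self_pos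

theorem natCast_mul_logb_div {b : ℝ} (m : ℕ) {n : ℕ} (hn : n ≠ 0) :
    m * Real.logb b (m / n) = Real.logb b (m ^ m) - m * Real.logb b n := by
  rw [← Real.logb_pow, div_pow, Real.logb_div (natCast_pow_self_pos m).ne' (by positivity),
    Real.logb_pow, Real.logb_pow]

theorem natCast_mul_binEntropy_div {n k : ℕ} (hk : k ≤ n) :
    n * binEntropy (k / n) =
      Real.logb 2 (n ^ n / (k ^ k * (n - k : ℕ) ^ (n - k))) := by
  rcases Nat.eq_zero_or_pos n with rfl | hn
  · obtain rfl : k = 0 := Nat.le_zero.mp hk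
    simp
  have one_sub : 1 - (k / n : ℝ) = (n - k : ℕ) / n := by
    field_simp
    push_cast [Nat.cast_sub hk]
    ring
  calc (n : ℝ) * binEntropy (k / n)
      = -(k * Real.logb 2 (k / n)) - (n - k : ℕ) * Real.logb 2 ((n - k : ℕ) / n) := by
        rw [binEntropy, one_sub]
        field_simp
    _ = Real.logb 2 (n ^ n) - Real.logb 2 (k ^ k) - Real.logb 2 ((n - k : ℕ) ^ (n - k)) := by
        rw [natCast_mul_logb_div _ hn.ne', natCast_mul_logb_div _ hn.ne', Real.logb_pow 2 (n : ℝ)]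
        push_cast [Nat.cast_sub hk]
        ring
    _ = Real.logb 2 (n ^ n / (k ^ k * (n - k : ℕ) ^ (n - k))) := by
        rw [Real.logb_div (by positivity)
            (mul_pos (natCast_pow_self_pos _) (natCast_pow_self_pos _)).ne',
          Real.logb_mul (natCast_pow_self_pos k).ne' (natCast_pow_self_pos _).ne']
        ring

theorem stmt_5_general (n k : ℕ) (hk : k ≤ n) :
    (n.choose k : ℝ) ≤ (2 : ℝ) ^ ((n : ℝ) * binEntropy ((k : ℝ) / (n : ℝ))) := by
  have hpos : (0 : ℝ) < k ^ k * (n - k : ℕ) ^ (n - k) :=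
    mul_pos (natCast_pow_self_pos k) (natCast_pow_self_pos (n - k))
  rw [natCast_mul_binEntropy_div hk, Real.rpow_logb two_pos (by norm_num)
    (div_pos (natCast_pow_self_pos n) hpos), le_div_iff₀ hpos, ← mul_assoc]
  exact_mod_cast Nat.choose_mul_pow_self_mul_pow_self_le hk

/-- `C(n,k) ≤ 2^{n·H(k/n)}` for `k ≤ n`, `n ≥ 1`. -/
theorem stmt_5 (n k : ℕ) (hn : 1 ≤ n) (hk : k ≤ n) :
    (n.choose k : ℝ) ≤ (2 : ℝ) ^ ((n : ℝ) * binEntropy ((k : ℝ) / (n : ℝ))) :=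
  stmt_5_general n k hk
end

section
/- Let L = log₂3 and let α* = (L−1)/(2L−1). Then (1/2)·H(α*) + (1−α*) + α*·L ≤ log₂(2.98582). (This shows that the simple quantum divide-and-conquer algorithm without classical preprocessing runs in time O*(γ₀ⁿ) with γ₀ ≤ 2.98582, improving on the classical O*(3ⁿ) bound.) -/
open Real hiding binEntropy

theorem binEntropy_le_crossEntropy {x p : ℝ} (hx₀ : 0 < x) (hx₁ : x < 1) (hp₀ : 0 < p)
    (hp₁ : p < 1) : binEntropy x ≤ -x * logb 2 p - (1 - x) * logb 2 (1 - p) := by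
  have gibbs (y q : ℝ) (hy : 0 < y) (hq : 0 < q) : y * (log q - log y) ≤ q - y := by
    rw [← log_div hq.ne' hy.ne']
    calc y * log (q / y) ≤ y * (q / y - 1) :=
          mul_le_mul_of_nonneg_left (log_le_sub_one_of_pos (by positivity)) hy.le
      _ = q - y := by field_simp
  have h₁ := gibbs x p hx₀ hp₀
  have h₂ := gibbs (1 - x) (1 - p) (by linarith) (by linarith)
  rw [binEntropy, ← sub_nonneg]
  have : -x * logb 2 p - (1 - x) * logb 2 (1 - p) - (-x * logb 2 x - (1 - x) * logb 2 (1 - x))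
      = -(x * (log p - log x) + (1 - x) * (log (1 - p) - log (1 - x))) / log 2 := by
    simp only [logb]
    ring
  rw [this]
  exact div_nonneg (by linarith) (log_pos one_lt_two).le

theorem sub_div_le_logb_div_of_pow_mul_le {b m n a c s : ℕ} (hb : 1 < b) (hm : 0 < m)
    (hn : 0 < n) (hs : 0 < s) (h : b ^ a * n ^ s ≤ b ^ c * m ^ s) :
    ((a : ℝ) - c) / s ≤ logb b ((m : ℝ) / n) := by
  have hb₁ : (1 : ℝ) < b := by exact_mod_cast hb
  have hb₀ : (0 : ℝ) < b := by linarith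
  have h' : (b : ℝ) ^ a * n ^ s ≤ (b : ℝ) ^ c * m ^ s := by exact_mod_cast h
  have hlog := logb_le_logb_of_le hb₁ (by positivity) h'
  rw [logb_mul (by positivity) (by positivity), logb_mul (by positivity) (by positivity),
    logb_pow, logb_pow, logb_pow, logb_pow, logb_self_eq_one hb₁] at hlog
  rw [logb_div (by positivity) (by positivity), div_le_iff₀ (by positivity)]
  linarith

theorem logb_div_le_sub_div_of_pow_mul_le {b m n a c s : ℕ} (hb : 1 < b) (hm : 0 < m)
    (hn : 0 < n) (hs : 0 < s) (h : b ^ c * m ^ s ≤ b ^ a * n ^ s) :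
    logb b ((m : ℝ) / n) ≤ ((a : ℝ) - c) / s := by
  have hlog := sub_div_le_logb_div_of_pow_mul_le hb hn hm hs h
  rw [← inv_div (m : ℝ) n, logb_inv] at hlog
  linarith [show ((c : ℝ) - a) / s = -(((a : ℝ) - c) / s) by ring]

theorem exponent_le_of_mem_Icc {L : ℝ} (hL : L ∈ Set.Icc (1054 / 665 : ℝ) (1539 / 971)) :
    (1 / 2) * ((L - 1) / (2 * L - 1) * (850 / 449) + (1 - (L - 1) / (2 * L - 1)) * (81 / 179))
      + (1 - (L - 1) / (2 * L - 1)) + (L - 1) / (2 * L - 1) * L ≤ 101 / 64 := by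
  obtain ⟨hL₁, hL₂⟩ := hL
  have hd : 0 < 2 * L - 1 := by linarith
  rw [← sub_nonpos]
  have hclear : (1 / 2) * ((L - 1) / (2 * L - 1) * (850 / 449)
        + (1 - (L - 1) / (2 * L - 1)) * (81 / 179))
      + (1 - (L - 1) / (2 * L - 1)) + (L - 1) / (2 * L - 1) * L - 101 / 64
      = ((1 / 2) * ((L - 1) * (850 / 449) + L * (81 / 179)) + L + (L - 1) * L
          - 101 / 64 * (2 * L - 1)) / (2 * L - 1) := by
    field_simp
    ring
  rw [hclear]
  apply div_nonpos_of_nonpos_of_nonneg _ hd.le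
  nlinarith [mul_nonneg (sub_nonneg.2 hL₁) (sub_nonneg.2 hL₂)]

theorem logb_two_three_mem_Icc : logb 2 3 ∈ Set.Icc (1054 / 665 : ℝ) (1539 / 971) := by
  constructor
  -- `decide +kernel`: the elaborator refuses to evaluate powers with exponents above 256.
  · simpa using sub_div_le_logb_div_of_pow_mul_le (b := 2) (m := 3) (n := 1) (a := 1054)
      (c := 0) (s := 665) (by norm_num) (by norm_num) (by norm_num) (by norm_num)
      (by decide +kernel)
  · simpa using logb_div_le_sub_div_of_pow_mul_le (b := 2) (m := 3) (n := 1) (a := 1539)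
      (c := 0) (s := 971) (by norm_num) (by norm_num) (by norm_num) (by norm_num)
      (by decide +kernel)

theorem binEntropy_le_affine_of_mem_Ioo {x : ℝ} (hx₀ : 0 < x) (hx₁ : x < 1) :
    binEntropy x ≤ x * (850 / 449) + (1 - x) * (81 / 179) := by
  have hp : -(850 : ℝ) / 449 ≤ logb 2 (7 / 26) := by
    simpa using sub_div_le_logb_div_of_pow_mul_le (b := 2) (m := 7) (n := 26) (a := 0)
      (c := 850) (s := 449) (by norm_num) (by norm_num) (by norm_num) (by norm_num)
      (by decide +kernel)
  have hq : -(81 : ℝ) / 179 ≤ logb 2 (1 - 7 / 26) := by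
    rw [show (1 : ℝ) - 7 / 26 = 19 / 26 by norm_num]
    simpa using sub_div_le_logb_div_of_pow_mul_le (b := 2) (m := 19) (n := 26) (a := 0)
      (c := 81) (s := 179) (by norm_num) (by norm_num) (by norm_num) (by norm_num)
      (by decide +kernel)
  have := binEntropy_le_crossEntropy hx₀ hx₁ (p := 7 / 26) (by norm_num) (by norm_num)
  linarith [mul_le_mul_of_nonneg_left hp hx₀.le, mul_le_mul_of_nonneg_left hq (sub_pos.2 hx₁).le]

theorem div_le_logb_two_two_point_98582 : (101 : ℝ) / 64 ≤ logb 2 2.98582 := by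
  have h := sub_div_le_logb_div_of_pow_mul_le (b := 2) (m := 149291) (n := 50000) (a := 101)
    (c := 0) (s := 64) (by norm_num) (by norm_num) (by norm_num) (by norm_num) (by decide +kernel)
  norm_num at h ⊢
  exact h

/-- For `α* = (log₂3 − 1)/(2·log₂3 − 1)`, the exponent of the simple quantum algorithm
satisfies `H(α*)/2 + (1−α*) + α*·log₂3 ≤ log₂ 2.98582`. -/
theorem stmt_12 :
    (1 / 2) * binEntropy ((Real.logb 2 3 - 1) / (2 * Real.logb 2 3 - 1))
        + (1 - (Real.logb 2 3 - 1) / (2 * Real.logb 2 3 - 1))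
        + ((Real.logb 2 3 - 1) / (2 * Real.logb 2 3 - 1)) * Real.logb 2 3
      ≤ Real.logb 2 2.98582 := by
  have hL := logb_two_three_mem_Icc
  set L := logb 2 3
  have hL₁ : 1 < L := by linarith [hL.1]
  have hα₀ : 0 < (L - 1) / (2 * L - 1) := div_pos (by linarith) (by linarith)
  have hα₁ : (L - 1) / (2 * L - 1) < 1 := (div_lt_one (by linarith)).2 (by linarith)
  calc _ ≤ (1 / 2) * ((L - 1) / (2 * L - 1) * (850 / 449)
          + (1 - (L - 1) / (2 * L - 1)) * (81 / 179))
        + (1 - (L - 1) / (2 * L - 1)) + (L - 1) / (2 * L - 1) * L := by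
        gcongr
        exact binEntropy_le_affine_of_mem_Ioo hα₀ hα₁
    _ ≤ 101 / 64 := exponent_le_of_mem_Icc hL
    _ ≤ logb 2 2.98582 := div_le_logb_two_two_point_98582
end

section
/- Let L = log₂3. There exist real numbers α₁, α₂ with 0 < α₁ < α₂ < 1 and α₁ < 1/3 such that (1/2)·α₂·H(α₁/α₂) + (1−α₂) + (α₂−α₁)·L = (1−α₂)·L, and (1−α₁) + H(α₁) = (1/2)·H(α₂) + (1−α₂)·L, and (1−α₁) + H(α₁) ≤ log₂(2.8569). (This shows that the two-parameter quantum divide-and-conquer algorithm runs in time O*(γ₂ⁿ) with γ₂ ≤ 2.8569.) -/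
open Set

-- `norm_num` evaluates powers only up to exponent 256; the guard `256 < n` makes this a
-- terminating `simp` rule that splits larger ones.
theorem pow_eq_pow_pow_div_mul_pow_mod {M : Type*} [Monoid M] (x : M) {n : ℕ} (_ : 256 < n) :
    x ^ n = (x ^ 256) ^ (n / 256) * x ^ (n % 256) := by
  rw [← pow_mul, ← pow_add, Nat.div_add_mod]

theorem div_le_logb_of_zpow_le_pow {b x : ℝ} {k : ℤ} {n : ℕ} (hb : 1 < b) (hn : 0 < n)
    (h : b ^ k ≤ x ^ n) : (k / n : ℝ) ≤ Real.logb b x := by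
  have hlog := Real.logb_le_logb_of_le hb (zpow_pos (by linarith) k) h
  rw [Real.logb_pow, ← Real.rpow_intCast, Real.logb_rpow (by linarith) hb.ne'] at hlog
  rw [div_le_iff₀ (by positivity)]
  linarith

theorem logb_le_div_of_pow_le_zpow {b x : ℝ} {k : ℤ} {n : ℕ} (hb : 1 < b) (hx : 0 < x) (hn : 0 < n)
    (h : x ^ n ≤ b ^ k) : Real.logb b x ≤ (k / n : ℝ) := by
  have hlog := Real.logb_le_logb_of_le hb (pow_pos hx n) h
  rw [Real.logb_pow, ← Real.rpow_intCast, Real.logb_rpow (by linarith) hb.ne'] at hlog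
  rw [le_div_iff₀ (by positivity)]
  linarith

theorem binEntropy_eq_div_log_two (x : ℝ) : binEntropy x = Real.binEntropy x / Real.log 2 := by
  rw [binEntropy, Real.binEntropy, Real.logb, Real.logb, Real.log_inv, Real.log_inv]
  ring

@[fun_prop]
theorem continuous_binEntropy : Continuous binEntropy := by
  simp only [funext binEntropy_eq_div_log_two]
  fun_prop

theorem binEntropy_nonneg {x : ℝ} (h₀ : 0 ≤ x) (h₁ : x ≤ 1) : 0 ≤ binEntropy x := by
  rw [binEntropy_eq_div_log_two]
  have := Real.binEntropy_nonneg h₀ h₁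
  positivity

theorem binEntropy_monotoneOn : MonotoneOn binEntropy (Icc 0 2⁻¹) := fun x hx y hy hxy => by
  simp only [binEntropy_eq_div_log_two]
  gcongr
  exact Real.binEntropy_strictMonoOn.monotoneOn hx hy hxy

theorem binEntropy_antitoneOn : AntitoneOn binEntropy (Icc 2⁻¹ 1) := fun x hx y hy hxy => by
  simp only [binEntropy_eq_div_log_two]
  gcongr
  exact Real.binEntropy_strictAntiOn.antitoneOn hx hy hxy

theorem le_binEntropy_of_pow_le_zpow {x : ℝ} {j k : ℤ} {m n : ℕ} (hx₀ : 0 < x) (hx₁ : x < 1)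
    (hm : 0 < m) (hn : 0 < n) (hj : x ^ m ≤ 2 ^ j) (hk : (1 - x) ^ n ≤ 2 ^ k) :
    -x * (j / m) - (1 - x) * (k / n) ≤ binEntropy x := by
  have h₁ := logb_le_div_of_pow_le_zpow one_lt_two hx₀ hm hj
  have h₂ := logb_le_div_of_pow_le_zpow one_lt_two (sub_pos.2 hx₁) hn hk
  rw [binEntropy]
  nlinarith

theorem binEntropy_le_of_zpow_le_pow {x : ℝ} {j k : ℤ} {m n : ℕ} (hx₀ : 0 ≤ x) (hx₁ : x ≤ 1)
    (hm : 0 < m) (hn : 0 < n) (hj : 2 ^ j ≤ x ^ m) (hk : 2 ^ k ≤ (1 - x) ^ n) :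
    binEntropy x ≤ -x * (j / m) - (1 - x) * (k / n) := by
  have h₁ := div_le_logb_of_zpow_le_pow one_lt_two hm hj
  have h₂ := div_le_logb_of_zpow_le_pow one_lt_two hn hk
  rw [binEntropy]
  nlinarith

theorem logb_two_three_mem : Real.logb 2 3 ∈ Icc 1.5849624 1.584963 := by
  constructor
  · refine (div_le_logb_of_zpow_le_pow (k := 1054) (n := 665) ?_ ?_ ?_).trans' ?_ <;>
      norm_num [pow_eq_pow_pow_div_mul_pow_mod]
  · refine (logb_le_div_of_pow_le_zpow (k := 4701) (n := 2966) ?_ ?_ ?_ ?_).trans ?_ <;>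
      norm_num [pow_eq_pow_pow_div_mul_pow_mod]

theorem one_lt_logb_two_three : 1 < Real.logb 2 3 :=
  lt_of_lt_of_le (by norm_num) logb_two_three_mem.1

noncomputable def alpha₂Denom (r : ℝ) : ℝ := binEntropy r / 2 + (2 - r) * Real.logb 2 3 - 1

-- The first equation with `α₁ = r α₂` reads `α₂ * alpha₂Denom r = log₂ 3 - 1`.
noncomputable def alpha₂ (r : ℝ) : ℝ := (Real.logb 2 3 - 1) / alpha₂Denom r

noncomputable def balanceGap (α₁ α₂ : ℝ) : ℝ :=
  (1 - α₁) + binEntropy α₁ - (1 / 2 * binEntropy α₂ + (1 - α₂) * Real.logb 2 3)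

theorem alpha₂Denom_pos {r : ℝ} (h₀ : 0 ≤ r) (h₁ : r ≤ 1) : 0 < alpha₂Denom r := by
  have hH := binEntropy_nonneg h₀ h₁
  have hL := one_lt_logb_two_three
  rw [alpha₂Denom]
  nlinarith

theorem alpha₂_pos {r : ℝ} (h₀ : 0 ≤ r) (h₁ : r ≤ 1) : 0 < alpha₂ r :=
  div_pos (sub_pos.2 one_lt_logb_two_three) (alpha₂Denom_pos h₀ h₁)

theorem first_equation_alpha₂ {r : ℝ} (h₀ : 0 ≤ r) (h₁ : r ≤ 1) :
    1 / 2 * alpha₂ r * binEntropy (r * alpha₂ r / alpha₂ r) + (1 - alpha₂ r) +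
      (alpha₂ r - r * alpha₂ r) * Real.logb 2 3 = (1 - alpha₂ r) * Real.logb 2 3 := by
  have h : alpha₂ r * alpha₂Denom r = Real.logb 2 3 - 1 :=
    div_mul_cancel₀ _ (alpha₂Denom_pos h₀ h₁).ne'
  rw [alpha₂Denom] at h
  rw [mul_div_cancel_right₀ r (alpha₂_pos h₀ h₁).ne']
  linear_combination h

theorem alpha₂Denom_antitoneOn : AntitoneOn alpha₂Denom (Icc 2⁻¹ 1) := fun x hx y hy hxy => by
  have hH := binEntropy_antitoneOn hx hy hxy
  have hL := one_lt_logb_two_three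
  simp only [alpha₂Denom]
  nlinarith

theorem alpha₂_monotoneOn : MonotoneOn alpha₂ (Icc 2⁻¹ 1) := fun x hx y hy hxy => by
  have hpos (z : ℝ) (hz : z ∈ Icc (2⁻¹ : ℝ) 1) : 0 < alpha₂Denom z :=
    alpha₂Denom_pos (by linarith [hz.1]) hz.2
  exact div_le_div_of_nonneg_left (sub_pos.2 one_lt_logb_two_three).le (hpos y hy)
    (alpha₂Denom_antitoneOn hx hy hxy)

theorem continuousOn_alpha₂ : ContinuousOn alpha₂ (Icc 0 1) :=
  continuousOn_const.div (by unfold alpha₂Denom; fun_prop)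
    fun r hr => (alpha₂Denom_pos hr.1 hr.2).ne'

theorem continuousOn_balanceGap_alpha₂ :
    ContinuousOn (fun r => balanceGap (r * alpha₂ r) (alpha₂ r)) (Icc 0 1) := by
  have := continuousOn_alpha₂
  unfold balanceGap
  fun_prop

theorem alpha₂_mem_Icc {r h₁ h₂ l₁ l₂ : ℝ} (hr : r ≤ 1) (hh₁ : 0 ≤ h₁)
    (hH : binEntropy r ∈ Icc h₁ h₂) (hl₁ : 1 < l₁) (hL : Real.logb 2 3 ∈ Icc l₁ l₂) :
    alpha₂ r ∈ Icc ((l₁ - 1) / (h₂ / 2 + (2 - r) * l₂ - 1))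
      ((l₂ - 1) / (h₁ / 2 + (2 - r) * l₁ - 1)) := by
  obtain ⟨hH₁, hH₂⟩ := hH
  obtain ⟨hL₁, hL₂⟩ := hL
  have hlow : 0 < h₁ / 2 + (2 - r) * l₁ - 1 := by
    nlinarith [mul_nonneg (sub_nonneg.2 hr) (by linarith : (0 : ℝ) ≤ l₁)]
  have hD₁ : h₁ / 2 + (2 - r) * l₁ - 1 ≤ alpha₂Denom r := by unfold alpha₂Denom; nlinarith
  have hD₂ : alpha₂Denom r ≤ h₂ / 2 + (2 - r) * l₂ - 1 := by unfold alpha₂Denom; nlinarith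
  exact ⟨div_le_div₀ (by linarith) (by linarith) (hlow.trans_le hD₁) hD₂,
    div_le_div₀ (by linarith) (by linarith) hlow hD₁⟩

theorem balanceGap_mul_le {r α₂ q₁ q₂ t : ℝ} (hr : 0 ≤ r) (hα₂ : α₂ ∈ Icc q₁ q₂) (hq₁ : 0 ≤ q₁)
    (hq₂ : q₂ ≤ 2⁻¹) (ht : r * q₂ ≤ t) (ht' : t ≤ 2⁻¹) :
    balanceGap (r * α₂) α₂ ≤
      1 - r * q₁ + binEntropy t - binEntropy q₁ / 2 - (1 - q₂) * Real.logb 2 3 := by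
  obtain ⟨h₁, h₂⟩ := hα₂
  have hα₂ : α₂ ∈ Icc (0 : ℝ) 2⁻¹ := ⟨hq₁.trans h₁, h₂.trans hq₂⟩
  have hα₁ : 0 ≤ r * α₂ := mul_nonneg hr hα₂.1
  have hrα₂ : r * α₂ ≤ t := (mul_le_mul_of_nonneg_left h₂ hr).trans ht
  have hHα₁ : binEntropy (r * α₂) ≤ binEntropy t :=
    binEntropy_monotoneOn ⟨hα₁, hrα₂.trans ht'⟩ ⟨hα₁.trans hrα₂, ht'⟩ hrα₂
  have hHα₂ : binEntropy q₁ ≤ binEntropy α₂ :=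
    binEntropy_monotoneOn ⟨hq₁, h₁.trans hα₂.2⟩ hα₂ h₁
  have hL := one_lt_logb_two_three
  unfold balanceGap
  nlinarith [mul_le_mul_of_nonneg_left h₁ hr]

theorem le_balanceGap_mul {r α₂ q₁ q₂ t : ℝ} (hr₀ : 0 ≤ r) (hr₁ : r ≤ 1) (hα₂ : α₂ ∈ Icc q₁ q₂)
    (hq₁ : 0 ≤ q₁) (hq₂ : q₂ ≤ 2⁻¹) (ht₀ : 0 ≤ t) (ht : t ≤ r * q₁) :
    1 - r * q₂ + binEntropy t - binEntropy q₂ / 2 - (1 - q₁) * Real.logb 2 3 ≤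
      balanceGap (r * α₂) α₂ := by
  obtain ⟨h₁, h₂⟩ := hα₂
  have hα₂ : α₂ ∈ Icc (0 : ℝ) 2⁻¹ := ⟨hq₁.trans h₁, h₂.trans hq₂⟩
  have hα₁ : r * α₂ ≤ 2⁻¹ := (mul_le_of_le_one_left hα₂.1 hr₁).trans hα₂.2
  have hrα₂ : t ≤ r * α₂ := ht.trans (mul_le_mul_of_nonneg_left h₁ hr₀)
  have hHα₁ : binEntropy t ≤ binEntropy (r * α₂) :=
    binEntropy_monotoneOn ⟨ht₀, hrα₂.trans hα₁⟩ ⟨ht₀.trans hrα₂, hα₁⟩ hrα₂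
  have hHα₂ : binEntropy α₂ ≤ binEntropy q₂ :=
    binEntropy_monotoneOn hα₂ ⟨hα₂.1.trans h₂, hq₂⟩ h₂
  have hL := one_lt_logb_two_three
  unfold balanceGap
  nlinarith [mul_le_mul_of_nonneg_left h₂ hr₀]

theorem alpha₂_left_mem : alpha₂ 0.576122 ∈ Icc 0.3345698 0.3345704 := by
  have hH : binEntropy 0.576122 ∈ Icc 0.9832149 0.9832154 := by
    constructor
    · refine (le_binEntropy_of_pow_le_zpow (j := -1646) (m := 2069) (k := -1928) (n := 1557)
        ?_ ?_ ?_ ?_ ?_ ?_).trans' ?_ <;> norm_num [pow_eq_pow_pow_div_mul_pow_mod]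
    · refine (binEntropy_le_of_zpow_le_pow (j := -2004) (m := 2519) (k := -2245) (n := 1813)
        ?_ ?_ ?_ ?_ ?_ ?_).trans ?_ <;> norm_num [pow_eq_pow_pow_div_mul_pow_mod]
  refine Icc_subset_Icc ?_ ?_ (alpha₂_mem_Icc ?_ ?_ hH ?_ logb_two_three_mem) <;> norm_num

theorem alpha₂_right_mem : alpha₂ 0.576128 ∈ Icc 0.3345718 0.3345725 := by
  have hH : binEntropy 0.576128 ∈ Icc 0.9832122 0.983213 := by
    constructor
    · refine (le_binEntropy_of_pow_le_zpow (j := -3673) (m := 4617) (k := -3466) (n := 2799)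
        ?_ ?_ ?_ ?_ ?_ ?_).trans' ?_ <;> norm_num [pow_eq_pow_pow_div_mul_pow_mod]
    · refine (binEntropy_le_of_zpow_le_pow (j := -214) (m := 269) (k := -2593) (n := 2094)
        ?_ ?_ ?_ ?_ ?_ ?_).trans ?_ <;> norm_num [pow_eq_pow_pow_div_mul_pow_mod]
  refine Icc_subset_Icc ?_ ?_ (alpha₂_mem_Icc ?_ ?_ hH ?_ logb_two_three_mem) <;> norm_num

theorem binEntropy_0_3345725_le : binEntropy 0.3345725 ≤ 0.9195305 := by
  refine (binEntropy_le_of_zpow_le_pow (j := -3641) (m := 2305) (k := -999) (n := 1700)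
    ?_ ?_ ?_ ?_ ?_ ?_).trans ?_ <;> norm_num [pow_eq_pow_pow_div_mul_pow_mod]

theorem balanceGap_left_neg : balanceGap (0.576122 * alpha₂ 0.576122) (alpha₂ 0.576122) < 0 := by
  have hHα₁ : binEntropy 0.1927534 ≤ 0.7071964 := by
    refine (binEntropy_le_of_zpow_le_pow (j := -6907) (m := 2908) (k := -523) (n := 1693)
      ?_ ?_ ?_ ?_ ?_ ?_).trans ?_ <;> norm_num [pow_eq_pow_pow_div_mul_pow_mod]
  have hHα₂ : 0.9195271 ≤ binEntropy 0.3345698 := by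
    refine (le_binEntropy_of_pow_le_zpow (j := -3333) (m := 2110) (k := -523) (n := 890)
      ?_ ?_ ?_ ?_ ?_ ?_).trans' ?_ <;> norm_num [pow_eq_pow_pow_div_mul_pow_mod]
  have hgap := balanceGap_mul_le (r := 0.576122) (t := 0.1927534) (by norm_num) alpha₂_left_mem
    (by norm_num) (by norm_num) (by norm_num) (by norm_num)
  linarith [logb_two_three_mem.1]

theorem balanceGap_right_pos : 0 < balanceGap (0.576128 * alpha₂ 0.576128) (alpha₂ 0.576128) := by
  have hHα₁ : 0.7072012 ≤ binEntropy 0.1927561 := by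
    refine (le_binEntropy_of_pow_le_zpow (j := -3919) (m := 1650) (k := -502) (n := 1625)
      ?_ ?_ ?_ ?_ ?_ ?_).trans' ?_ <;> norm_num [pow_eq_pow_pow_div_mul_pow_mod]
  have hgap := le_balanceGap_mul (r := 0.576128) (t := 0.1927561) (by norm_num) (by norm_num)
    alpha₂_right_mem (by norm_num) (by norm_num) (by norm_num) (by norm_num)
  linarith [logb_two_three_mem.2, binEntropy_0_3345725_le]

theorem half_binEntropy_add_mul_logb_two_three_le {α₂ : ℝ} (h : α₂ ∈ Icc 0.3345698 0.3345725) :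
    1 / 2 * binEntropy α₂ + (1 - α₂) * Real.logb 2 3 ≤ Real.logb 2 2.8569 := by
  have hH : binEntropy α₂ ≤ 0.9195305 :=
    (binEntropy_monotoneOn ⟨by linarith [h.1], by linarith [h.2]⟩ (by norm_num) h.2).trans
      binEntropy_0_3345725_le
  have hL : (1 - α₂) * Real.logb 2 3 ≤ (1 - 0.3345698) * 1.584963 :=
    mul_le_mul (by linarith [h.1]) logb_two_three_mem.2 (by linarith [one_lt_logb_two_three])
      (by norm_num)
  have hlog : 1.51445 ≤ Real.logb 2 2.8569 := by
    refine (div_le_logb_of_zpow_le_pow (k := 10795) (n := 7128) ?_ ?_ ?_).trans' ?_ <;>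
      norm_num [pow_eq_pow_pow_div_mul_pow_mod]
  linarith

/-- Two-parameter quantum divide-and-conquer: there are `0 < α₁ < α₂ < 1`, `α₁ < 1/3`,
balancing the recurrences, with exponent at most `log₂ 2.8569`. -/
theorem stmt_14 :
    ∃ α₁ α₂ : ℝ, 0 < α₁ ∧ α₁ < α₂ ∧ α₂ < 1 ∧ α₁ < 1 / 3 ∧
      (1 / 2) * α₂ * binEntropy (α₁ / α₂) + (1 - α₂) + (α₂ - α₁) * Real.logb 2 3
        = (1 - α₂) * Real.logb 2 3 ∧
      (1 - α₁) + binEntropy α₁ = (1 / 2) * binEntropy α₂ + (1 - α₂) * Real.logb 2 3 ∧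
      (1 - α₁) + binEntropy α₁ ≤ Real.logb 2 2.8569 := by
  obtain ⟨r, ⟨hr₁, hr₂⟩, hgap⟩ : (0 : ℝ) ∈
      (fun r => balanceGap (r * alpha₂ r) (alpha₂ r)) '' Icc 0.576122 0.576128 :=
    intermediate_value_Icc (by norm_num)
      (continuousOn_balanceGap_alpha₂.mono (Icc_subset_Icc (by norm_num) (by norm_num)))
      ⟨balanceGap_left_neg.le, balanceGap_right_pos.le⟩
  have hr : r ∈ Icc (2⁻¹ : ℝ) 1 := ⟨by linarith, by linarith⟩
  have hα₂ : alpha₂ r ∈ Icc 0.3345698 0.3345725 :=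
    ⟨alpha₂_left_mem.1.trans (alpha₂_monotoneOn (by norm_num) hr hr₁),
      (alpha₂_monotoneOn hr (by norm_num) hr₂).trans alpha₂_right_mem.2⟩
  have hsecond := sub_eq_zero.mp hgap
  have hα₂_pos : 0 < alpha₂ r := by linarith [hα₂.1]
  refine ⟨r * alpha₂ r, alpha₂ r, by positivity, mul_lt_of_lt_one_left hα₂_pos (by linarith),
    by linarith [hα₂.2], by nlinarith [hα₂.2], first_equation_alpha₂ (by linarith) hr.2, hsecond,
    hsecond ▸ half_binEntropy_add_mul_logb_two_three_le hα₂⟩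
end
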